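/- arXiv:2312.14256 — 2 statements merged into one kernel-verified Lean document; each statement's English description precedes it below -/
import Mathlib

section
/- The Minimax voting method, defined on all profiles with at least two alternatives, satisfies immunity to spoilers: for any profile P with |X(P)| ≥ 3 and alternatives a,b ∈ X(P), if a ∈ Minimax(P_{-b}), Minimax(P|{a,b}) = {a}, and b ∉ Minimax(P), then a ∈ Minimax(P). -/
/-!
Formalization of notions from "An extension of May's Theorem to three
alternatives: axiomatizing Minimax voting" by Holliday and Pacuit.

The set of voters is the countably infinite set `ℕ`; the set `α` of
alternatives is a type (assumed to have at least three elements where the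
paper assumes `|𝒳| ≥ 3`).
-/

namespace MayMinimax

/-- A profile: a finite set of voters drawn from the countably infinite set `ℕ`
of all voters, a finite set of alternatives, and, for each voter, a binary
relation on alternatives given as a Boolean-valued function:
`P.rel i a b = true` means that voter `i` ranks `a` above `b`. -/
structure Profile (α : Type*) where
  voters : Finset ℕ
  alts : Finset α
  rel : ℕ → α → α → Bool

variable {α : Type*} [DecidableEq α]

/-- Each voter's ballot is a strict weak order (asymmetric and negatively
transitive) on the alternatives. -/
def IsSWO (P : Profile α) : Prop :=
  ∀ i ∈ P.voters,
    (∀ a ∈ P.alts, ∀ b ∈ P.alts, P.rel i a b = true → P.rel i b a = false) ∧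
    (∀ a ∈ P.alts, ∀ b ∈ P.alts, ∀ c ∈ P.alts,
      P.rel i a b = false → P.rel i b c = false → P.rel i a c = false)

/-- The margin of `a` over `b` in `P`: the number of voters ranking `a` above
`b` minus the number of voters ranking `b` above `a`. -/
def Margin (P : Profile α) (a b : α) : ℤ :=
  ((P.voters.filter fun i => P.rel i a b = true).card : ℤ) -
    ((P.voters.filter fun i => P.rel i b a = true).card : ℤ)

/-- The number of voters ranking `a` above `b` in `P`. -/
def Support (P : Profile α) (a b : α) : ℕ :=
  (P.voters.filter fun i => P.rel i a b = true).card

/-- The Minimax score of `a`: the maximum margin of any other alternative over `a`. -/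
def MMScore (P : Profile α) (a : α) : ℤ :=
  WithBot.unbotD 0 (((P.alts.erase a).image fun b => Margin P b a).max)

/-- The set of Minimax winners: alternatives with minimal Minimax score. -/
def Minimax (P : Profile α) : Finset α :=
  P.alts.filter fun a => ∀ b ∈ P.alts, MMScore P a ≤ MMScore P b

/-- Restriction of a profile to a subset `Y` of the alternatives. -/
def Profile.restrict (P : Profile α) (Y : Finset α) : Profile α where
  voters := P.voters
  alts := Y
  rel := fun i a b => P.rel i a b && decide (a ∈ Y) && decide (b ∈ Y)

/-- `P.minus b` is `P` restricted to `X(P) \ {b}`. -/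
def Profile.minus (P : Profile α) (b : α) : Profile α :=
  P.restrict (P.alts.erase b)

/-- The combination `P + Q` of two profiles (used with disjoint voter sets and
the same set of alternatives). -/
def Profile.combine (P Q : Profile α) : Profile α where
  voters := P.voters ∪ Q.voters
  alts := P.alts
  rel := fun i a b => if i ∈ P.voters then P.rel i a b else Q.rel i a b

/-- `2P`: the profile `P` together with a copy of `P` on a disjoint set of voters. -/
def Profile.double (P : Profile α) : Profile α where
  voters := P.voters ∪ P.voters.image fun i => i + (P.voters.sup id + 1)
  alts := P.alts
  rel := fun i a b =>
    if i ∈ P.voters then P.rel i a b else P.rel (i - (P.voters.sup id + 1)) a b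

/-- `r` is (the strict part of) a linear order on the finite set `X`. -/
def IsLinearOn (r : α → α → Bool) (X : Finset α) : Prop :=
  (∀ a ∈ X, r a a = false) ∧
  (∀ a ∈ X, ∀ b ∈ X, ∀ c ∈ X, r a b = true → r b c = true → r a c = true) ∧
  (∀ a ∈ X, ∀ b ∈ X, a ≠ b → (r a b = true ∨ r b a = true)) ∧
  (∀ a ∈ X, ∀ b ∈ X, r a b = true → r b a = false)

/-- `Q` is a block profile for the set `X` of alternatives: it contains, for
each linear order of `X`, exactly one voter submitting that linear order, and
no other voters. -/
def IsBlock (X : Finset α) (Q : Profile α) : Prop :=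
  Q.alts = X ∧
  (∀ i ∈ Q.voters, IsLinearOn (Q.rel i) X) ∧
  (∀ r : α → α → Bool, IsLinearOn r X →
    ∃! i, i ∈ Q.voters ∧ ∀ a ∈ X, ∀ b ∈ X, Q.rel i a b = r a b)

/-- `P'` is obtained from `P` by one voter who ranked `a` uniquely last in `P`
switching to ranking `a` uniquely first in `P'`, with the restriction of that
voter's relation to `X(P) \ {a}` unchanged and all other voters' relations
unchanged. -/
def MoveLastToFirst (P P' : Profile α) (a : α) : Prop :=
  P'.voters = P.voters ∧ P'.alts = P.alts ∧ a ∈ P.alts ∧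
  ∃ i ∈ P.voters,
    (∀ b ∈ P.alts, b ≠ a → P.rel i b a = true) ∧
    (∀ b ∈ P.alts, b ≠ a → P'.rel i a b = true) ∧
    (∀ b ∈ P.alts, b ≠ a → ∀ c ∈ P.alts, c ≠ a → P'.rel i b c = P.rel i b c) ∧
    (∀ j ∈ P.voters, j ≠ i → ∀ x ∈ P.alts, ∀ y ∈ P.alts, P'.rel j x y = P.rel j x y)

/-- `P'` is obtained from `P` by adding one new voter who ranks `a` uniquely
first, all old voters' relations being unchanged. -/
def AddTopVoter (P P' : Profile α) (a : α) : Prop :=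
  P'.alts = P.alts ∧
  ∃ j, j ∉ P.voters ∧ P'.voters = insert j P.voters ∧
    (∀ b ∈ P.alts, b ≠ a → P'.rel j a b = true) ∧
    (∀ i ∈ P.voters, ∀ x ∈ P.alts, ∀ y ∈ P.alts, P'.rel i x y = P.rel i x y)

/-- `P'` is obtained from `P` by one voter improving the position of `a` in
their ballot, while nothing else changes. -/
def ImproveFor (P P' : Profile α) (a : α) : Prop :=
  P'.voters = P.voters ∧ P'.alts = P.alts ∧
  ∃ i ∈ P.voters,
    (∃ b ∈ P.alts, b ≠ a ∧
      ((P.rel i a b = false ∧ P'.rel i a b = true) ∨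
        (P.rel i b a = true ∧ P'.rel i b a = false))) ∧
    (∀ c ∈ P.alts, c ≠ a →
      (P.rel i a c = true → P'.rel i a c = true) ∧
      (P.rel i c a = false → P'.rel i c a = false)) ∧
    (∀ c ∈ P.alts, c ≠ a → ∀ d ∈ P.alts, d ≠ a → P'.rel i c d = P.rel i c d) ∧
    (∀ j ∈ P.voters, j ≠ i → ∀ x ∈ P.alts, ∀ y ∈ P.alts, P'.rel j x y = P.rel j x y)

/-- Anonymity relative to a domain `D` of profiles. -/
def Anonymity (D : Set (Profile α)) (F : Profile α → Finset α) : Prop :=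
  ∀ P ∈ D, ∀ P' ∈ D, P.alts = P'.alts →
    (∃ π : Equiv.Perm ℕ, P.voters.image π = P'.voters ∧
      ∀ i ∈ P.voters, ∀ a ∈ P.alts, ∀ b ∈ P.alts, P.rel i a b = P'.rel (π i) a b) →
    F P = F P'

/-- Neutrality relative to a domain `D` of profiles. -/
def Neutrality (D : Set (Profile α)) (F : Profile α → Finset α) : Prop :=
  ∀ P ∈ D, ∀ P' ∈ D, P.voters = P'.voters →
    ∀ τ : Equiv.Perm α, P.alts.image τ = P'.alts →
      (∀ i ∈ P.voters, ∀ a ∈ P.alts, ∀ b ∈ P.alts, P.rel i a b = P'.rel i (τ a) (τ b)) →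
      (F P).image τ = F P'

/-- Weak positive responsiveness relative to a domain `D` of profiles. -/
def WeakPositiveResponsiveness (D : Set (Profile α)) (F : Profile α → Finset α) : Prop :=
  ∀ P ∈ D, ∀ P' ∈ D, ∀ a ∈ F P, MoveLastToFirst P P' a → F P' = {a}

/-- (Full) positive responsiveness relative to a domain `D` of profiles. -/
def PositiveResponsiveness (D : Set (Profile α)) (F : Profile α → Finset α) : Prop :=
  ∀ P ∈ D, ∀ P' ∈ D, ∀ a ∈ F P, ImproveFor P P' a → F P' = {a}

/-- Positive involvement relative to a domain `D` of profiles. -/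
def PositiveInvolvement (D : Set (Profile α)) (F : Profile α → Finset α) : Prop :=
  ∀ P ∈ D, ∀ P' ∈ D, ∀ a ∈ F P, AddTopVoter P P' a → a ∈ F P'

/-- Near immunity to spoilers relative to a domain `D` of profiles. -/
def NearImmunityToSpoilers (D : Set (Profile α)) (F : Profile α → Finset α) : Prop :=
  ∀ P ∈ D, ∀ a ∈ P.alts, ∀ b ∈ P.alts,
    P.minus b ∈ D → P.restrict {a, b} ∈ D →
    F (P.minus b) = {a} → F (P.restrict {a, b}) = {a} → b ∉ F P → a ∈ F P

/-- Immunity to spoilers relative to a domain `D` of profiles. -/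
def ImmunityToSpoilers (D : Set (Profile α)) (F : Profile α → Finset α) : Prop :=
  ∀ P ∈ D, ∀ a ∈ P.alts, ∀ b ∈ P.alts,
    P.minus b ∈ D → P.restrict {a, b} ∈ D →
    a ∈ F (P.minus b) → F (P.restrict {a, b}) = {a} → b ∉ F P → a ∈ F P

/-- (Inclusion) homogeneity relative to a domain `D` of profiles. -/
def Homogeneity (D : Set (Profile α)) (F : Profile α → Finset α) : Prop :=
  ∀ P ∈ D, P.double ∈ D ∧ F P ⊆ F P.double

/-- Block preservation relative to a domain `D` of profiles. -/
def BlockPreservation (D : Set (Profile α)) (F : Profile α → Finset α) : Prop :=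
  ∀ P ∈ D, ∀ Q ∈ D, Disjoint P.voters Q.voters → IsBlock P.alts Q →
    P.combine Q ∈ D ∧ F P ⊆ F (P.combine Q)

/-- Condorcet consistency relative to a domain `D` of profiles. -/
def CondorcetConsistent (D : Set (Profile α)) (F : Profile α → Finset α) : Prop :=
  ∀ P ∈ D, ∀ c ∈ P.alts, (∀ x ∈ P.alts, x ≠ c → 0 < Margin P c x) → F P = {c}

/-- The domain of all (strict-weak-order) profiles with exactly two alternatives. -/
def Dom2 (α : Type*) : Set (Profile α) :=
  {P | IsSWO P ∧ P.voters.Nonempty ∧ P.alts.card = 2}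

/-- The domain of all profiles with two or three alternatives. -/
def Dom23 (α : Type*) : Set (Profile α) :=
  {P | IsSWO P ∧ P.voters.Nonempty ∧ (P.alts.card = 2 ∨ P.alts.card = 3)}

/-- The domain of all profiles with at least two alternatives. -/
def DomGe2 (α : Type*) : Set (Profile α) :=
  {P | IsSWO P ∧ P.voters.Nonempty ∧ 2 ≤ P.alts.card}

/-- The domain of all profiles. -/
def DomAll (α : Type*) : Set (Profile α) :=
  {P | IsSWO P ∧ P.voters.Nonempty ∧ P.alts.Nonempty}

/-- The support-based Minimax score of `a`: the maximum of `Support P b a`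
over all `b` with a positive margin over `a` (`0` if there is no such `b`). -/
def SupportMMScore (P : Profile α) (a : α) : ℕ :=
  WithBot.unbotD 0 ((((P.alts.erase a).filter fun b => 0 < Margin P b a).image fun b =>
    Support P b a).max)

/-- Support-based Minimax: alternatives with minimal support-based Minimax score. -/
def SupportMinimax (P : Profile α) : Finset α :=
  P.alts.filter fun a => ∀ b ∈ P.alts, SupportMMScore P a ≤ SupportMMScore P b

/-- The set of weak Condorcet winners in `P`. -/
def WeakCondorcetWinners (P : Profile α) : Finset α :=
  P.alts.filter fun a => ∀ x ∈ P.alts, 0 ≤ Margin P a x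

/-- The plurality score of `a`: the number of voters ranking `a` uniquely first. -/
def PluralityScore (P : Profile α) (a : α) : ℕ :=
  (P.voters.filter fun i => ∀ b ∈ P.alts, b ≠ a → P.rel i a b = true).card

/-- The Condorcet-Plurality voting method: the weak Condorcet winners if there
are any; otherwise the alternatives with maximal plurality score. -/
def CP (P : Profile α) : Finset α :=
  if (WeakCondorcetWinners P).Nonempty then WeakCondorcetWinners P
  else P.alts.filter fun a => ∀ b ∈ P.alts, PluralityScore P b ≤ PluralityScore P a

/-- The marginal Borda score of `a`: the sum of the margins of `a` over the
alternatives. -/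
def MarginalBorda (P : Profile α) (a : α) : ℤ :=
  ∑ b ∈ P.alts, Margin P a b

/-- Minimax MB: the Minimax winners with greatest marginal Borda score. -/
def MinimaxMB (P : Profile α) : Finset α :=
  (Minimax P).filter fun a => ∀ b ∈ Minimax P, MarginalBorda P b ≤ MarginalBorda P a

/-- `P` and `P'` have the same ordinal margin graph. -/
def SameOrdinalMarginGraph (P P' : Profile α) : Prop :=
  P.alts = P'.alts ∧
  (∀ a ∈ P.alts, ∀ b ∈ P.alts, (0 < Margin P a b ↔ 0 < Margin P' a b)) ∧
  (∀ a ∈ P.alts, ∀ b ∈ P.alts, ∀ c ∈ P.alts, ∀ d ∈ P.alts,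
    (Margin P c d ≤ Margin P a b ↔ Margin P' c d ≤ Margin P' a b))

/-- Ordinal margin invariance relative to a domain `D` of profiles. -/
def OrdinalMarginInvariance (D : Set (Profile α)) (F : Profile α → Finset α) : Prop :=
  ∀ P ∈ D, ∀ P' ∈ D, SameOrdinalMarginGraph P P' → F P = F P'

/-- `P` is uniquely-weighted: distinct pairs of distinct alternatives have
distinct margins. -/
def UniquelyWeighted (P : Profile α) : Prop :=
  ∀ a ∈ P.alts, ∀ b ∈ P.alts, ∀ c ∈ P.alts, ∀ d ∈ P.alts,
    a ≠ b → c ≠ d → (a, b) ≠ (c, d) → Margin P a b ≠ Margin P c d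

/-!
Removing alternatives can only lower a Minimax score, and adding `b` back to `P_{-b}` raises
the score of `a` by at most the margin of `b` over `a`, which is negative since `a` beats `b`
head to head. So either the score of `a` in `P` is at most its score in `P_{-b}`, hence at most
the score of every alternative other than `b`; or it is negative, hence below every other
score, because the scores of two alternatives always sum to at least `0`. Finally `b`, not
being a winner, scores more than some alternative, and so more than `a`.
-/

theorem mem_minimax {P : Profile α} {a : α} :
    a ∈ Minimax P ↔ a ∈ P.alts ∧ ∀ c ∈ P.alts, MMScore P a ≤ MMScore P c :=
  Finset.mem_filter

theorem neg_margin {α : Type*} (P : Profile α) (x y : α) : -Margin P x y = Margin P y x := by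
  unfold Margin; ring

theorem margin_restrict (P : Profile α) {Y : Finset α} {x y : α} (hx : x ∈ Y) (hy : y ∈ Y) :
    Margin (P.restrict Y) x y = Margin P x y := by
  simp [Margin, Profile.restrict, hx, hy]

theorem mmScore_eq_sup' (P : Profile α) {a : α} (h : (P.alts.erase a).Nonempty) :
    MMScore P a = (P.alts.erase a).sup' h (Margin P · a) := by
  rw [MMScore, ← Finset.coe_max' (h.image _), Finset.max'_eq_sup', Finset.sup'_image]
  rfl

theorem margin_le_mmScore (P : Profile α) {a c : α} (hc : c ∈ P.alts) (hca : c ≠ a) :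
    Margin P c a ≤ MMScore P a := by
  have hc' : c ∈ P.alts.erase a := Finset.mem_erase.mpr ⟨hca, hc⟩
  rw [mmScore_eq_sup' P ⟨c, hc'⟩]
  exact Finset.le_sup' (Margin P · a) hc'

theorem mmScore_le (P : Profile α) {a : α} {t : ℤ} (h : (P.alts.erase a).Nonempty)
    (ht : ∀ c ∈ P.alts, c ≠ a → Margin P c a ≤ t) : MMScore P a ≤ t := by
  rw [mmScore_eq_sup' P h]
  exact Finset.sup'_le h _ fun c hc => ht c (Finset.mem_of_mem_erase hc) (Finset.ne_of_mem_erase hc)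

theorem neg_mmScore_le (P : Profile α) {a c : α} (ha : a ∈ P.alts) (hc : c ∈ P.alts)
    (hca : c ≠ a) : -MMScore P a ≤ MMScore P c := by
  have h₁ := margin_le_mmScore P ha hca.symm
  have h₂ := margin_le_mmScore P hc hca
  rw [← neg_margin] at h₁
  omega

theorem mmScore_restrict_le (P : Profile α) {Y : Finset α} {a : α} (hY : Y ⊆ P.alts)
    (ha : a ∈ Y) (h : (Y.erase a).Nonempty) : MMScore (P.restrict Y) a ≤ MMScore P a :=
  mmScore_le _ h fun c hc hca => by
    rw [margin_restrict (Y := Y) P hc ha]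
    exact margin_le_mmScore P (hY hc) hca

theorem mmScore_le_max_mmScore_minus (P : Profile α) {a b : α} (ha : a ∈ P.alts)
    (hb : b ∈ P.alts) (hab : a ≠ b) :
    MMScore P a ≤ max (MMScore (P.minus b) a) (Margin P b a) := by
  refine mmScore_le P ⟨b, Finset.mem_erase.mpr ⟨hab.symm, hb⟩⟩ fun c hc hca => ?_
  rcases eq_or_ne c b with rfl | hcb
  · exact le_max_right _ _
  · have hc' : c ∈ P.alts.erase b := Finset.mem_erase.mpr ⟨hcb, hc⟩
    have ha' : a ∈ P.alts.erase b := Finset.mem_erase.mpr ⟨hab, ha⟩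
    rw [← margin_restrict P hc' ha']
    exact le_max_of_le_left (margin_le_mmScore _ hc' hca)

theorem mmScore_restrict_pair (P : Profile α) {a b : α} (hab : a ≠ b) :
    MMScore (P.restrict {a, b}) a = Margin P b a := by
  have h : ((P.restrict {a, b}).alts.erase a) = {b} := Finset.erase_insert (by simp [hab])
  rw [mmScore_eq_sup' _ (by rw [h]; exact Finset.singleton_nonempty b)]
  simp only [h, Finset.sup'_singleton]
  exact margin_restrict P (by simp) (by simp)

theorem exists_mmScore_lt_of_notMem_minimax {P : Profile α} {b : α} (hb : b ∈ P.alts)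
    (hbP : b ∉ Minimax P) : ∃ c ∈ P.alts, MMScore P c < MMScore P b := by
  simpa [mem_minimax, hb] using hbP

theorem margin_neg_of_minimax_restrict_pair {P : Profile α} {a b : α} (hab : a ≠ b)
    (h : Minimax (P.restrict {a, b}) = {a}) : Margin P b a < 0 := by
  have hb : b ∉ Minimax (P.restrict {a, b}) := by
    rw [h, Finset.mem_singleton]
    exact hab.symm
  obtain ⟨c, hc, hlt⟩ := exists_mmScore_lt_of_notMem_minimax (by simp [Profile.restrict]) hb
  have hca : c = a := (Finset.mem_insert.mp hc).resolve_right fun hcb => by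
    rw [Finset.mem_singleton.mp hcb] at hlt
    exact lt_irrefl _ hlt
  rw [hca, mmScore_restrict_pair P hab, Finset.pair_comm, mmScore_restrict_pair P hab.symm] at hlt
  have := neg_margin P a b
  omega

theorem mem_minimax_of_forall_ne_le {P : Profile α} {a b : α} (ha : a ∈ P.alts)
    (hb : b ∉ Minimax P) (h : ∀ c ∈ P.alts, c ≠ b → MMScore P a ≤ MMScore P c) :
    a ∈ Minimax P := by
  refine mem_minimax.mpr ⟨ha, fun c hc => ?_⟩
  rcases eq_or_ne c b with rfl | hcb
  · obtain ⟨d, hd, hlt⟩ := exists_mmScore_lt_of_notMem_minimax hc hb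
    have hdc : d ≠ c := by
      rintro rfl
      exact lt_irrefl _ hlt
    exact (h d hd hdc).trans hlt.le
  · exact h c hc hcb

theorem minimax_immunity_to_spoilers_general {α : Type*} [DecidableEq α] :
    ∀ P : Profile α, IsSWO P → P.voters.Nonempty → 3 ≤ P.alts.card →
      ∀ a ∈ P.alts, ∀ b ∈ P.alts,
        a ∈ Minimax (P.minus b) →
        Minimax (P.restrict {a, b}) = {a} →
        b ∉ Minimax P → a ∈ Minimax P := by
  intro P _ _ _ a ha b hb haMinus hPair hbNot
  have hab : a ≠ b := Finset.ne_of_mem_erase (mem_minimax.mp haMinus).1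
  have hba : Margin P b a < 0 := margin_neg_of_minimax_restrict_pair hab hPair
  refine mem_minimax_of_forall_ne_le ha hbNot fun c hc hcb => ?_
  rcases eq_or_ne c a with rfl | hca
  · exact le_rfl
  rcases le_max_iff.mp (mmScore_le_max_mmScore_minus P ha hb hab) with h | h
  · have hc' : c ∈ P.alts.erase b := Finset.mem_erase.mpr ⟨hcb, hc⟩
    calc MMScore P a ≤ MMScore (P.minus b) a := h
      _ ≤ MMScore (P.minus b) c := (mem_minimax.mp haMinus).2 c hc'
      _ ≤ MMScore P c := mmScore_restrict_le P (Finset.erase_subset b P.alts) hc'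
          ⟨a, by simp [hab, hca.symm, ha]⟩
  · have := neg_mmScore_le P ha hc hca
    omega

/-- Minimax satisfies immunity to spoilers: if `a` wins without `b`,
`a` beats `b` head-to-head, and `b` loses in the full profile, then `a`
wins in the full profile. -/
theorem minimax_immunity_to_spoilers {α : Type*} [DecidableEq α]
    (hX : ∃ x y z : α, x ≠ y ∧ x ≠ z ∧ y ≠ z) :
    ∀ P : Profile α, IsSWO P → P.voters.Nonempty → 3 ≤ P.alts.card →
      ∀ a ∈ P.alts, ∀ b ∈ P.alts,
        a ∈ Minimax (P.minus b) →
        Minimax (P.restrict {a, b}) = {a} →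
        b ∉ Minimax P → a ∈ Minimax P :=
  minimax_immunity_to_spoilers_general

end MayMinimax
end

section
/- The Condorcet-Plurality voting method CP, defined on all profiles, satisfies weak positive responsiveness: if a ∈ CP(P) and P' is obtained from P by one voter who ranked a uniquely last in P switching to ranking a uniquely first in P', otherwise keeping their ranking the same, then CP(P') = {a}. -/
/-!
The moving voter changes only the comparisons involving `a`, all in `a`'s favour: every margin
of `a` grows by `2`, the plurality score of `a` grows by `1`, and no other alternative gains a
margin or a first place. If `a` was a weak Condorcet winner it becomes the unique strict one.
Otherwise `P` had no weak Condorcet winner and `a` had maximal plurality score; an alternative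
other than `a` that is a weak Condorcet winner after the move would already have been one before,
so `P'` has no weak Condorcet winner besides `a`, and `a` now has strictly maximal plurality
score.
-/

namespace MayMinimax

variable {α : Type*}

lemma margin_swap (P : Profile α) (a b : α) : Margin P b a = -Margin P a b := by
  unfold Margin; ring

lemma margin_self (P : Profile α) (a : α) : Margin P a a = 0 := by
  unfold Margin; ring

lemma IsSWO.rel_eq_false_of_rel_eq_true {P : Profile α} (hP : IsSWO P) {i : ℕ}
    (hi : i ∈ P.voters) {a b : α} (ha : a ∈ P.alts) (hb : b ∈ P.alts)
    (hab : P.rel i a b = true) : P.rel i b a = false :=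
  (hP i hi).1 a ha b hb hab

lemma card_filter_add_ite_eq {ι : Type*} [DecidableEq ι] {s : Finset ι} {i : ι} (hi : i ∈ s)
    {p q : ι → Prop} [DecidablePred p] [DecidablePred q] (h : ∀ j ∈ s, j ≠ i → (p j ↔ q j)) :
    (s.filter p).card + (if q i then 1 else 0) = (s.filter q).card + (if p i then 1 else 0) := by
  have herase : (s.erase i).filter p = (s.erase i).filter q :=
    Finset.filter_congr fun j hj => h j (Finset.mem_of_mem_erase hj) (Finset.ne_of_mem_erase hj)
  simp only [Finset.card_filter, ← Finset.sum_erase_add s _ hi]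
  rw [← Finset.card_filter, ← Finset.card_filter, herase]
  ring

lemma margin_eq_support_sub (P : Profile α) (a b : α) :
    Margin P a b = Support P a b - Support P b a :=
  rfl

section OneVoterChanges

variable {P P' : Profile α} {i : ℕ}

lemma support_add_ite_eq (hv : P'.voters = P.voters) (hi : i ∈ P.voters)
    (hothers : ∀ j ∈ P.voters, j ≠ i → ∀ x ∈ P.alts, ∀ y ∈ P.alts, P'.rel j x y = P.rel j x y)
    {x y : α} (hx : x ∈ P.alts) (hy : y ∈ P.alts) :
    Support P' x y + (if P.rel i x y then 1 else 0) =
      Support P x y + (if P'.rel i x y then 1 else 0) := by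
  unfold Support
  rw [hv]
  exact card_filter_add_ite_eq (p := fun j => P'.rel j x y) (q := fun j => P.rel j x y) hi
    fun j hj hji => by rw [hothers j hj hji x hx y hy]

lemma pluralityScore_add_ite_eq [DecidableEq α] (hv : P'.voters = P.voters)
    (halts : P'.alts = P.alts) (hi : i ∈ P.voters)
    (hothers : ∀ j ∈ P.voters, j ≠ i → ∀ x ∈ P.alts, ∀ y ∈ P.alts, P'.rel j x y = P.rel j x y)
    {c : α} (hc : c ∈ P.alts) :
    PluralityScore P' c + (if ∀ x ∈ P.alts, x ≠ c → P.rel i c x then 1 else 0) =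
      PluralityScore P c + (if ∀ x ∈ P'.alts, x ≠ c → P'.rel i c x then 1 else 0) := by
  unfold PluralityScore
  rw [hv]
  refine card_filter_add_ite_eq (p := fun j => ∀ x ∈ P'.alts, x ≠ c → P'.rel j c x)
    (q := fun j => ∀ x ∈ P.alts, x ≠ c → P.rel j c x) hi fun j hj hji => ?_
  rw [halts]
  exact forall₂_congr fun x hx => by rw [hothers j hj hji c hc x hx]

end OneVoterChanges

section CondorcetPlurality

variable {P : Profile α} {a : α}

lemma weakCondorcetWinners_eq_singleton_of_margin_pos (ha : a ∈ P.alts)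
    (h : ∀ x ∈ P.alts, x ≠ a → 0 < Margin P a x) : WeakCondorcetWinners P = {a} := by
  ext c
  simp only [WeakCondorcetWinners, Finset.mem_filter, Finset.mem_singleton]
  constructor
  · rintro ⟨hc, hc_win⟩
    by_contra hca
    have := hc_win a ha
    have := h c hc hca
    linarith [margin_swap P a c]
  · rintro rfl
    refine ⟨ha, fun x hx => ?_⟩
    rcases eq_or_ne x c with rfl | hxa
    · rw [margin_self]
    · exact (h x hx hxa).le

variable [DecidableEq α]

lemma cp_eq_singleton_of_weakCondorcetWinners_eq (h : WeakCondorcetWinners P = {a}) :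
    CP P = {a} := by
  rw [CP, if_pos (h ▸ Finset.singleton_nonempty a), h]

lemma cp_eq_singleton_of_pluralityScore_lt (hW : WeakCondorcetWinners P ⊆ {a})
    (ha : a ∈ P.alts) (h : ∀ b ∈ P.alts, b ≠ a → PluralityScore P b < PluralityScore P a) :
    CP P = {a} := by
  rcases Finset.subset_singleton_iff.1 hW with hW | hW
  · rw [CP, if_neg (by simp [hW])]
    ext c
    simp only [Finset.mem_filter, Finset.mem_singleton]
    constructor
    · rintro ⟨hc, hc_max⟩
      by_contra hca
      exact (h c hc hca).not_ge (hc_max a ha)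
    · rintro rfl
      refine ⟨ha, fun b hb => ?_⟩
      rcases eq_or_ne b c with rfl | hbc
      · rfl
      · exact (h b hb hbc).le
  · exact cp_eq_singleton_of_weakCondorcetWinners_eq hW

lemma weakCondorcetWinners_eq_empty_of_mem_cp (ha : a ∈ CP P)
    (haW : a ∉ WeakCondorcetWinners P) : WeakCondorcetWinners P = ∅ := by
  by_contra hW
  rw [CP, if_pos (Finset.nonempty_iff_ne_empty.2 hW)] at ha
  exact haW ha

lemma pluralityScore_le_of_mem_cp (ha : a ∈ CP P) (haW : a ∉ WeakCondorcetWinners P) :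
    ∀ b ∈ P.alts, PluralityScore P b ≤ PluralityScore P a := by
  rw [CP, if_neg (by simp [weakCondorcetWinners_eq_empty_of_mem_cp ha haW])] at ha
  exact (Finset.mem_filter.1 ha).2

end CondorcetPlurality

namespace MoveLastToFirst

variable {P P' : Profile α} {a b c : α}

lemma alts_eq (h : MoveLastToFirst P P' a) : P'.alts = P.alts :=
  h.2.1

lemma mem_alts (h : MoveLastToFirst P P' a) : a ∈ P.alts :=
  h.2.2.1

lemma rel_eq (h : MoveLastToFirst P P' a) {j : ℕ} (hj : j ∈ P.voters) (hb : b ∈ P.alts)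
    (hba : b ≠ a) (hc : c ∈ P.alts) (hca : c ≠ a) : P'.rel j b c = P.rel j b c := by
  obtain ⟨-, -, ha, i, -, -, -, hkeep, hothers⟩ := h
  rcases eq_or_ne j i with rfl | hji
  · exact hkeep b hb hba c hc hca
  · exact hothers j hj hji b hb c hc

lemma support_eq (h : MoveLastToFirst P P' a) (hb : b ∈ P.alts) (hba : b ≠ a)
    (hc : c ∈ P.alts) (hca : c ≠ a) : Support P' b c = Support P b c := by
  unfold Support
  rw [h.1]
  exact congrArg _ (Finset.filter_congr fun j hj => by rw [h.rel_eq hj hb hba hc hca])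

lemma margin_eq (h : MoveLastToFirst P P' a) (hb : b ∈ P.alts) (hba : b ≠ a)
    (hc : c ∈ P.alts) (hca : c ≠ a) : Margin P' b c = Margin P b c := by
  rw [margin_eq_support_sub, margin_eq_support_sub, h.support_eq hb hba hc hca,
    h.support_eq hc hca hb hba]

lemma margin_eq_add_two (h : MoveLastToFirst P P' a) (hP : IsSWO P) (hP' : IsSWO P')
    (hb : b ∈ P.alts) (hba : b ≠ a) : Margin P' a b = Margin P a b + 2 := by
  obtain ⟨hv, halts, ha, i, hi, hlast, hfirst, -, hothers⟩ := h
  have hab_old : P.rel i a b = false :=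
    hP.rel_eq_false_of_rel_eq_true hi hb ha (hlast b hb hba)
  have hba_new : P'.rel i b a = false :=
    hP'.rel_eq_false_of_rel_eq_true (hv ▸ hi) (halts ▸ ha) (halts ▸ hb) (hfirst b hb hba)
  have hab := support_add_ite_eq hv hi hothers ha hb
  have hba' := support_add_ite_eq hv hi hothers hb ha
  simp only [hfirst b hb hba, hlast b hb hba, hab_old, hba_new, if_true, Bool.false_eq_true,
    if_false] at hab hba'
  rw [margin_eq_support_sub, margin_eq_support_sub]
  omega

lemma weakCondorcetWinners_eq_singleton (h : MoveLastToFirst P P' a) (hP : IsSWO P)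
    (hP' : IsSWO P') (ha : a ∈ WeakCondorcetWinners P) : WeakCondorcetWinners P' = {a} := by
  obtain ⟨haX, ha_win⟩ := Finset.mem_filter.1 ha
  refine weakCondorcetWinners_eq_singleton_of_margin_pos (h.alts_eq ▸ haX) fun x hx hxa => ?_
  rw [h.alts_eq] at hx
  rw [h.margin_eq_add_two hP hP' hx hxa]
  linarith [ha_win x hx]

lemma mem_weakCondorcetWinners_of_ne (h : MoveLastToFirst P P' a) (hP : IsSWO P)
    (hP' : IsSWO P') (hc : c ∈ WeakCondorcetWinners P') (hca : c ≠ a) :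
    c ∈ WeakCondorcetWinners P := by
  obtain ⟨hcX, hc_win⟩ := Finset.mem_filter.1 hc
  rw [h.alts_eq] at hcX hc_win
  refine Finset.mem_filter.2 ⟨hcX, fun x hx => ?_⟩
  rcases eq_or_ne x a with rfl | hxa
  · have := hc_win x h.mem_alts
    rw [margin_swap, h.margin_eq_add_two hP hP' hcX hca] at this
    linarith [margin_swap P x c]
  · rw [← h.margin_eq hcX hca hx hxa]
    exact hc_win x hx

lemma weakCondorcetWinners_subset (h : MoveLastToFirst P P' a) (hP : IsSWO P)
    (hP' : IsSWO P') (hW : WeakCondorcetWinners P = ∅) : WeakCondorcetWinners P' ⊆ {a} :=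
  Finset.subset_singleton_iff'.2 fun c hc => by
    by_contra hca
    simpa [hW] using h.mem_weakCondorcetWinners_of_ne hP hP' hc hca

variable [DecidableEq α]

lemma pluralityScore_eq_add_one (h : MoveLastToFirst P P' a) (hP : IsSWO P)
    (hb : b ∈ P.alts) (hba : b ≠ a) : PluralityScore P' a = PluralityScore P a + 1 := by
  obtain ⟨hv, halts, ha, i, hi, hlast, hfirst, -, hothers⟩ := h
  have hnot_first : ¬∀ x ∈ P.alts, x ≠ a → P.rel i a x = true := fun hfirst_old => by
    have := hfirst_old b hb hba
    rw [hP.rel_eq_false_of_rel_eq_true hi hb ha (hlast b hb hba)] at this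
    exact Bool.false_ne_true this
  have hcount := pluralityScore_add_ite_eq hv halts hi hothers ha
  rw [if_neg hnot_first, if_pos (halts ▸ hfirst)] at hcount
  omega

lemma pluralityScore_le (h : MoveLastToFirst P P' a) (hP' : IsSWO P') (hb : b ∈ P.alts)
    (hba : b ≠ a) : PluralityScore P' b ≤ PluralityScore P b := by
  obtain ⟨hv, halts, ha, i, hi, -, hfirst, -, hothers⟩ := h
  have hnot_first : ¬∀ x ∈ P'.alts, x ≠ b → P'.rel i b x = true := fun hfirst_new => by
    have := hfirst_new a (halts ▸ ha) hba.symm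
    rw [hP'.rel_eq_false_of_rel_eq_true (hv ▸ hi) (halts ▸ ha) (halts ▸ hb)
      (hfirst b hb hba)] at this
    exact Bool.false_ne_true this
  have hcount := pluralityScore_add_ite_eq hv halts hi hothers hb
  rw [if_neg hnot_first] at hcount
  split_ifs at hcount <;> omega

end MoveLastToFirst

theorem cp_weak_positive_responsiveness_general {α : Type*} [DecidableEq α] :
    ∀ P P' : Profile α, IsSWO P → P.voters.Nonempty → P.alts.Nonempty →
      IsSWO P' →
      ∀ a ∈ CP P, MoveLastToFirst P P' a → CP P' = {a} := by
  intro P P' hP _ _ hP' a haCP hmove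
  by_cases haW : a ∈ WeakCondorcetWinners P
  · exact cp_eq_singleton_of_weakCondorcetWinners_eq
      (hmove.weakCondorcetWinners_eq_singleton hP hP' haW)
  have hW := weakCondorcetWinners_eq_empty_of_mem_cp haCP haW
  refine cp_eq_singleton_of_pluralityScore_lt (hmove.weakCondorcetWinners_subset hP hP' hW)
    (hmove.alts_eq ▸ hmove.mem_alts) fun b hb hba => ?_
  rw [hmove.alts_eq] at hb
  calc PluralityScore P' b ≤ PluralityScore P b := hmove.pluralityScore_le hP' hb hba
    _ ≤ PluralityScore P a := pluralityScore_le_of_mem_cp haCP haW b hb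
    _ < PluralityScore P' a := by rw [hmove.pluralityScore_eq_add_one hP hb hba]; omega

/-- Condorcet-Plurality, defined on all profiles, satisfies weak positive
responsiveness. -/
theorem cp_weak_positive_responsiveness {α : Type*} [DecidableEq α]
    (hX : ∃ x y z : α, x ≠ y ∧ x ≠ z ∧ y ≠ z) :
    ∀ P P' : Profile α, IsSWO P → P.voters.Nonempty → P.alts.Nonempty →
      IsSWO P' →
      ∀ a ∈ CP P, MoveLastToFirst P P' a → CP P' = {a} :=
  cp_weak_positive_responsiveness_general

end MayMinimax
end
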